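/- arXiv:math/0302154 — 5 statements merged into one kernel-verified Lean document; each statement's English description precedes it below -/
import Mathlib

section
/- In F_2[X,Y,Z], the identity det[[X,Y^2,X^8],[Y,Z^2,Y^8],[Z,X^2,Z^8]] = (X^3Y + Y^3Z + Z^3X) * det[[X,Y^2,Z^4],[Y,Z^2,X^4],[Z,X^2,Y^4]] holds. -/
open MvPolynomial

/-- The Klein quartic as a quotient of two Moore-type determinants over `F_2`. -/
theorem klein_det_identity :
    Matrix.det !![X 0, X 1 ^ 2, X 0 ^ 8; X 1, X 2 ^ 2, X 1 ^ 8; X 2, X 0 ^ 2, X 2 ^ 8] =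
      (X 0 ^ 3 * X 1 + X 1 ^ 3 * X 2 + X 2 ^ 3 * X 0 : MvPolynomial (Fin 3) (ZMod 2)) *
        Matrix.det !![X 0, X 1 ^ 2, X 2 ^ 4; X 1, X 2 ^ 2, X 0 ^ 4; X 2, X 0 ^ 2, X 1 ^ 4] := by
  simp [Matrix.det_fin_three]
  ring_nf
  simp only [sub_eq_add_neg, CharTwo.two_eq_zero, CharTwo.neg_eq, mul_zero, zero_mul, add_zero, zero_add]
end

section
/- Work in Q[X,Y,Z] with s_1 = X+Y+Z, s_2 = XY+YZ+ZX. Define x = ((X^3Y+Y^3Z+Z^3X) + s_2^2)/s_1, y = s_1·s_2, z = XYZ. Then y^2·z - 5·x·y·z + x^3 + x^2·z + 7·x·z^2 = (X^3Y+Y^3Z+Z^3X)(X^3Y^2+Y^3Z^2+Z^3X^2) as rational functions, i.e. after clearing the denominator s_1^3 both sides agree as polynomials. -/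
open MvPolynomial

set_option maxHeartbeats 2000000 in
/-- In the fraction field of `ℚ[X,Y,Z]`, with `x = ((X³Y+Y³Z+Z³X) + s₂²)/s₁`,
`y = s₁·s₂`, `z = XYZ`, one has
`y²z - 5xyz + x³ + x²z + 7xz² = (X³Y+Y³Z+Z³X)(X³Y²+Y³Z²+Z³X²)`; moreover `x` is
in fact the polynomial `X²Y + Y²Z + Z²X + XYZ`. -/
theorem klein_elliptic_quotient' :
    ∀ (K : Type) (_ : Field K) (_ : Algebra (MvPolynomial (Fin 3) ℚ) K)
      (_ : IsFractionRing (MvPolynomial (Fin 3) ℚ) K),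
    let i := algebraMap (MvPolynomial (Fin 3) ℚ) K
    let x : K := (i (X 0 ^ 3 * X 1 + X 1 ^ 3 * X 2 + X 2 ^ 3 * X 0) +
        i (X 0 * X 1 + X 1 * X 2 + X 2 * X 0) ^ 2) / i (X 0 + X 1 + X 2)
    let y : K := i ((X 0 + X 1 + X 2) * (X 0 * X 1 + X 1 * X 2 + X 2 * X 0))
    let z : K := i (X 0 * X 1 * X 2)
    x = i (X 0 ^ 2 * X 1 + X 1 ^ 2 * X 2 + X 2 ^ 2 * X 0 + X 0 * X 1 * X 2) ∧
    y ^ 2 * z - 5 * x * y * z + x ^ 3 + x ^ 2 * z + 7 * x * z ^ 2 =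
      i ((X 0 ^ 3 * X 1 + X 1 ^ 3 * X 2 + X 2 ^ 3 * X 0) *
         (X 0 ^ 3 * X 1 ^ 2 + X 1 ^ 3 * X 2 ^ 2 + X 2 ^ 3 * X 0 ^ 2)) := by
  intro K _ _ _ i x y z
  have hinj := IsFractionRing.injective (MvPolynomial (Fin 3) ℚ) K
  have hs1 : (X 0 + X 1 + X 2 : MvPolynomial (Fin 3) ℚ) ≠ 0 := by
    intro h
    have := congrArg (eval fun _ => (1 : ℚ)) h
    norm_num at this
  have hs1' : i (X 0 + X 1 + X 2) ≠ 0 := by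
    rw [show i = algebraMap (MvPolynomial (Fin 3) ℚ) K from rfl]
    exact (map_ne_zero_iff _ hinj).mpr hs1
  have hx : x = i (X 0 ^ 2 * X 1 + X 1 ^ 2 * X 2 + X 2 ^ 2 * X 0 + X 0 * X 1 * X 2) := by
    show _ / _ = _
    rw [div_eq_iff hs1', ← map_pow, ← map_mul, ← map_add]
    exact congrArg i (by ring)
  refine ⟨hx, ?_⟩
  rw [hx]
  show i _ ^ 2 * i _ - 5 * i _ * (i _) * i _ + i _ ^ 3 + i _ ^ 2 * i _ + 7 * i _ * i _ ^ 2 = _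
  rw [(map_ofNat i 5).symm, (map_ofNat i 7).symm]
  simp only [← map_pow, ← map_mul, ← map_add, ← map_sub]
  exact congrArg i (by ring)
end

section
/- Over F_2, the curve γ_{1,0}: X^4+Y^4+Z^4+X^3Y+XZ^3+Y^3Z+XYZ^2 = 0 has no points in P^2(F_2) and no points in P^2(F_4). -/
section Aux

variable {K : Type*} [Field K] [Fintype K]

/-- In any field of cardinality 4 (so of characteristic 2), the quartic form
`X^4+Y^4+Z^4+X^3Y+XZ^3+Y^3Z+XYZ^2` has no nontrivial zero. -/
lemma quartic_no_zero_card_four (hcard : Fintype.card K = 4) (h2 : (2 : K) = 0)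
    (x y z : K) (hv : ¬(x = 0 ∧ y = 0 ∧ z = 0)) :
    x ^ 4 + y ^ 4 + z ^ 4 + x ^ 3 * y + x * z ^ 3
      + y ^ 3 * z + x * y * z ^ 2 ≠ 0 := by
  have cube : ∀ a : K, a ≠ 0 → a ^ 3 = 1 := by
    intro a ha
    have := FiniteField.pow_card_sub_one_eq_one a ha
    rwa [hcard] at this
  have pow4 : ∀ a : K, a ^ 4 = 0 → a = 0 := fun a ha =>
    pow_eq_zero_iff (n := 4) (by norm_num) |>.mp ha
  intro h
  by_cases hx : x = 0 <;> by_cases hy : y = 0 <;> by_cases hz : z = 0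
  · exact hv ⟨hx, hy, hz⟩
  · subst hx hy; exact hz (pow4 z (by linear_combination h))
  · subst hx hz; exact hy (pow4 y (by linear_combination h))
  · have hy3 := cube y hy
    have hz3 := cube z hz
    subst hx
    exact hy (by linear_combination h - y * hy3 - z * hz3 - z * hy3 - z * h2)
  · subst hy hz; exact hx (pow4 x (by linear_combination h))
  · have hx3 := cube x hx
    have hz3 := cube z hz
    subst hy
    exact hz (by linear_combination h - x * hx3 - z * hz3 - x * hz3 - x * h2)
  · have hx3 := cube x hx
    have hy3 := cube y hy
    subst hz
    exact hx (by linear_combination h - x * hx3 - y * hy3 - y * hx3 - y * h2)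
  · have hx3 := cube x hx
    have hy3 := cube y hy
    have hz3 := cube z hz
    have hxyz : x * y * z ^ 2 = 0 := by
      linear_combination h - x * hx3 - y * hy3 - z * hz3 - y * hx3 - x * hz3
        - z * hy3 - (x + y + z) * h2
    rcases mul_eq_zero.mp hxyz with h' | h'
    · rcases mul_eq_zero.mp h' with h'' | h''
      · exact hx h''
      · exact hy h''
    · exact hz (pow_eq_zero_iff (n := 2) (by norm_num) |>.mp h')

end Aux

/-- The curve `γ_{1,0}` has no points over `F_2` and none over `F_4`. -/
theorem gamma10_no_points :
    (∀ v : ZMod 2 × ZMod 2 × ZMod 2, v ≠ 0 →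
      v.1 ^ 4 + v.2.1 ^ 4 + v.2.2 ^ 4 + v.1 ^ 3 * v.2.1 + v.1 * v.2.2 ^ 3
        + v.2.1 ^ 3 * v.2.2 + v.1 * v.2.1 * v.2.2 ^ 2 ≠ 0) ∧
    (∀ v : GaloisField 2 2 × GaloisField 2 2 × GaloisField 2 2, v ≠ 0 →
      v.1 ^ 4 + v.2.1 ^ 4 + v.2.2 ^ 4 + v.1 ^ 3 * v.2.1 + v.1 * v.2.2 ^ 3
        + v.2.1 ^ 3 * v.2.2 + v.1 * v.2.1 * v.2.2 ^ 2 ≠ 0) := by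
  constructor
  · decide
  · rintro ⟨x, y, z⟩ hv
    haveI : Fintype (GaloisField 2 2) := Fintype.ofFinite _
    have hcard : Fintype.card (GaloisField 2 2) = 4 := by
      have := GaloisField.card 2 2 (by norm_num)
      rwa [Nat.card_eq_fintype_card] at this
    have h2 : (2 : GaloisField 2 2) = 0 := by
      exact_mod_cast CharP.cast_eq_zero (GaloisField 2 2) 2
    refine quartic_no_zero_card_four hcard h2 x y z ?_
    rintro ⟨hx, hy, hz⟩
    exact hv (by simp [Prod.ext_iff, hx, hy, hz])
end

section
/- For each a in F_8 with a ≠ 0, the line a^2 X + a Y + a^4 Z = 0 is a bitangent of the Klein quartic over the algebraic closure of F_2: the restriction of X^3Y + Y^3Z + Z^3X to this line is the square of a quadratic form. -/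
/-- For each nonzero `a ∈ F_8`, the line `a²X + aY + a⁴Z = 0` is a bitangent of the
Klein quartic: parametrizing the line as `(s, a·s + a³·t, t)` (valid since `a ≠ 0`),
the restriction of `X³Y + Y³Z + Z³X` is the square of a binary quadratic form. -/
theorem klein_bitangent (a : GaloisField 2 3) (ha : a ≠ 0) :
    ∃ b c d : GaloisField 2 3, ∀ s t : GaloisField 2 3,
      s ^ 3 * (a * s + a ^ 3 * t) + (a * s + a ^ 3 * t) ^ 3 * t + t ^ 3 * s =
        (b * s ^ 2 + c * s * t + d * t ^ 2) ^ 2 := by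
  have : Fintype (GaloisField 2 3) := Fintype.ofFinite _
  have hcard : Fintype.card (GaloisField 2 3) = 8 := by
    rw [← Nat.card_eq_fintype_card, GaloisField.card 2 3 (by norm_num)]; norm_num
  have h7 : a ^ 7 = 1 := by
    have := FiniteField.pow_card_sub_one_eq_one a ha
    rwa [hcard] at this
  have h2 : (2 : GaloisField 2 3) = 0 := by
    have := CharP.cast_eq_zero (GaloisField 2 3) 2
    simpa using this
  refine ⟨a ^ 4, a ^ 6, a, fun s t => ?_⟩
  linear_combination (-a*s^4 - 2*a^3*s^3*t - a^5*s^2*t^2 + s*t^3 + a^2*t^4) * h7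
    + (s*t^3) * h2
end

section
/- In characteristic 2, the 7 lines X=0, Y=0, Z=0, X+Y=0, Y+Z=0, X+Z=0, X+Y+Z=0 are each bitangents of the invariant quartic α: X^4+Y^4+Z^4+X^2Y^2+Y^2Z^2+Z^2X^2+X^2YZ+XY^2Z+XYZ^2 = 0, i.e. the restriction of α to each of these lines is the square of a quadratic form. -/
/-- The invariant quartic `α` over (an algebraic closure of) `F_2`. -/
def alphaForm {R : Type*} [CommRing R] (x y z : R) : R :=
  x ^ 4 + y ^ 4 + z ^ 4 + x ^ 2 * y ^ 2 + y ^ 2 * z ^ 2 + z ^ 2 * x ^ 2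
    + x ^ 2 * y * z + x * y ^ 2 * z + x * y * z ^ 2

/-- A binary quartic expression (as a function of parameters `s, t`) is the square of a
binary quadratic form. -/
def IsSquareOfQuadratic {R : Type*} [CommRing R] (g : R → R → R) : Prop :=
  ∃ b c d : R, ∀ s t : R, g s t = (b * s ^ 2 + c * s * t + d * t ^ 2) ^ 2

/-- In characteristic 2, each of the seven `F_2`-rational lines is a bitangent of the
invariant quartic `α`: the restriction of `α` to each line is the square of a quadratic
form. -/
theorem alpha_seven_bitangents :
    IsSquareOfQuadratic (fun s t : AlgebraicClosure (ZMod 2) => alphaForm 0 s t) ∧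
    IsSquareOfQuadratic (fun s t : AlgebraicClosure (ZMod 2) => alphaForm s 0 t) ∧
    IsSquareOfQuadratic (fun s t : AlgebraicClosure (ZMod 2) => alphaForm s t 0) ∧
    IsSquareOfQuadratic (fun s t : AlgebraicClosure (ZMod 2) => alphaForm s s t) ∧
    IsSquareOfQuadratic (fun s t : AlgebraicClosure (ZMod 2) => alphaForm s t t) ∧
    IsSquareOfQuadratic (fun s t : AlgebraicClosure (ZMod 2) => alphaForm s t s) ∧
    IsSquareOfQuadratic (fun s t : AlgebraicClosure (ZMod 2) => alphaForm s t (s + t)) := by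
  have h2 : (2 : AlgebraicClosure (ZMod 2)) = 0 := by
    have := CharP.cast_eq_zero (AlgebraicClosure (ZMod 2)) 2
    exact_mod_cast this
  refine ⟨⟨1, 1, 1, fun s t => ?_⟩, ⟨1, 1, 1, fun s t => ?_⟩, ⟨1, 1, 1, fun s t => ?_⟩,
    ⟨1, 1, 1, fun s t => ?_⟩, ⟨1, 1, 1, fun s t => ?_⟩, ⟨1, 1, 1, fun s t => ?_⟩,
    ⟨1, 1, 1, fun s t => ?_⟩⟩ <;> simp only [alphaForm]
  · linear_combination (-(s^2*t^2) - s^3*t - s*t^3) * h2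
  · linear_combination (-(s^2*t^2) - s^3*t - s*t^3) * h2
  · linear_combination (-(s^2*t^2) - s^3*t - s*t^3) * h2
  · linear_combination (s^4 - s*t^3) * h2
  · linear_combination (t^4 - s^3*t) * h2
  · linear_combination (s^4 - s*t^3) * h2
  · linear_combination (s^4 + t^4 + 3*s^3*t + 5*s^2*t^2 + 3*s*t^3) * h2
end
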